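/- Let 𝒜 be a finite list in a finitely generated abelian group Γ and G a torsion-wise finite abelian group. If 𝒮 ⊂ 𝒯 ⊂ 𝒜 are sublists with r_𝒮 = r_𝒯, then ρ_𝒯(𝒮; G) := Σ_{𝒮⊂ℬ⊂𝒯} (−1)^{#ℬ−#𝒮} m(ℬ; G) is a nonnegative integer; in fact it equals the cardinality of the set of homomorphisms φ : Γ'/⟨𝒮⟩ → G with φ(ᾱ) ≠ 0 for all α ∈ 𝒯\𝒮, where Γ' = {g ∈ Γ : n·g ∈ ⟨𝒮⟩ for some n > 0}. -/

import Mathlib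

def TorsionwiseFinite (G : Type*) [AddCommGroup G] : Prop :=
  ∀ d : ℕ, 0 < d → Finite {x : G // d • x = 0}

noncomputable def rk (Γ : Type*) [AddCommGroup Γ] (X : Set Γ) : ℕ :=
  Module.finrank ℤ (AddSubgroup.closure X)

noncomputable def mult (Γ : Type*) [AddCommGroup Γ] (G : Type*) [AddCommGroup G]
    (X : Set Γ) : ℕ :=
  Nat.card ((AddCommGroup.torsion (Γ ⧸ AddSubgroup.closure X)) →+ G)

/-- The saturation `Γ' = {g ∈ Γ | ∃ n > 0, n • g ∈ H}` of a subgroup `H`. -/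
def sat {Γ : Type*} [AddCommGroup Γ] (H : AddSubgroup Γ) : AddSubgroup Γ where
  carrier := {g | ∃ n : ℕ, 0 < n ∧ n • g ∈ H}
  zero_mem' := ⟨1, Nat.one_pos, by simpa using H.zero_mem⟩
  add_mem' := by
    rintro x y ⟨m, hm, hx⟩ ⟨n, hn, hy⟩
    refine ⟨m * n, Nat.mul_pos hm hn, ?_⟩
    rw [smul_add]
    exact add_mem (by rw [mul_comm, mul_smul]; exact AddSubgroup.nsmul_mem H hx n)
      (by rw [mul_smul]; exact AddSubgroup.nsmul_mem H hy m)
  neg_mem' := by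
    rintro x ⟨n, hn, hx⟩
    exact ⟨n, hn, by rw [smul_neg]; exact AddSubgroup.neg_mem H hx⟩

/-!
Since `r_𝒮 = r_𝒯`, every `α ∈ 𝒯` lies in the saturation `Γ'` of `⟨𝒮⟩`, so `Γ'` is also the
saturation of `⟨ℬ⟩` for `𝒮 ⊆ ℬ ⊆ 𝒯`, and `(Γ/⟨ℬ⟩)_tor ≅ Γ'/⟨ℬ⟩`. Hence `m(ℬ; G)` counts the
homomorphisms on the finite group `Γ'/⟨𝒮⟩` that vanish on the classes of `ℬ \ 𝒮`, and the
alternating sum is inclusion–exclusion for those vanishing on none of the classes of `𝒯 \ 𝒮`.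
-/

open AddSubgroup QuotientAddGroup

instance AddSubgroup.moduleFinite_int {A : Type*} [AddCommGroup A] [AddGroup.FG A]
    (H : AddSubgroup A) : Module.Finite ℤ H :=
  have : Module.Finite ℤ A := Module.Finite.iff_addGroup_fg.mpr ‹_›
  inferInstanceAs (Module.Finite ℤ (toIntSubmodule H))

instance AddCommGroup.finite_torsion {A : Type*} [AddCommGroup A] [AddGroup.FG A] :
    Finite (AddCommGroup.torsion A) :=
  have : AddGroup.FG (AddCommGroup.torsion A) := Module.Finite.iff_addGroup_fg.mp inferInstance
  AddCommGroup.finite_of_fg_isAddTorsion _ (AddCommMonoid.addTorsion.isAddTorsion (G := A))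

lemma SetLike.forall_coe_eq_iff {A α : Type*} [SetLike A α] {M : A} {x : α} (hx : x ∈ M)
    {P : M → Prop} : (∀ g : M, (g : α) = x → P g) ↔ P ⟨x, hx⟩ :=
  ⟨fun h => h _ rfl, fun h g hg => by subst hg; exact h⟩

section Saturation

variable {Γ : Type*} [AddCommGroup Γ]

lemma le_sat (H : AddSubgroup Γ) : H ≤ sat H := fun x hx => ⟨1, one_pos, by simpa using hx⟩

lemma sat_mono {H K : AddSubgroup Γ} (h : H ≤ K) : sat H ≤ sat K :=
  fun _ ⟨n, hn, hx⟩ => ⟨n, hn, h hx⟩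

lemma sat_eq_of_le_of_le_sat {H K : AddSubgroup Γ} (hHK : H ≤ K) (hK : K ≤ sat H) :
    sat K = sat H := by
  refine le_antisymm (fun x ⟨n, hn, hx⟩ => ?_) (sat_mono hHK)
  obtain ⟨m, hm, hmx⟩ := hK hx
  exact ⟨m * n, Nat.mul_pos hm hn, by rwa [mul_smul]⟩

lemma mem_sat_of_zsmul_mem {H : AddSubgroup Γ} {x : Γ} {c : ℤ} (hc : c ≠ 0) (hx : c • x ∈ H) :
    x ∈ sat H := by
  refine ⟨c.natAbs, Int.natAbs_pos.mpr hc, ?_⟩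
  rcases Int.natAbs_eq c with h | h
  · rwa [h, natCast_zsmul] at hx
  · rwa [h, neg_smul, neg_mem_iff, natCast_zsmul] at hx

lemma le_sat_of_finrank_eq [AddGroup.FG Γ] {N M : AddSubgroup Γ} (hNM : N ≤ M)
    (h : Module.finrank ℤ N = Module.finrank ℤ M) : M ≤ sat N := by
  intro x hx
  let W : Submodule ℤ M := toIntSubmodule (N.addSubgroupOf M)
  have hW : Module.finrank ℤ W = Module.finrank ℤ M :=
    (addSubgroupOfEquivOfLe hNM).toIntLinearEquiv.finrank_eq.trans h
  have hquot : Module.finrank ℤ (M ⧸ W) = 0 := by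
    have := W.finrank_quotient_add_finrank
    omega
  obtain ⟨c, hc, hcx⟩ := Module.finrank_eq_zero_iff.mp hquot (Submodule.Quotient.mk ⟨x, hx⟩)
  rw [← Submodule.Quotient.mk_smul, Submodule.Quotient.mk_eq_zero] at hcx
  exact mem_sat_of_zsmul_mem hc hcx

variable (Γ) in
def satToTorsion (K : AddSubgroup Γ) : sat K →+ AddCommGroup.torsion (Γ ⧸ K) :=
  ((mk' K).domRestrict (sat K)).codRestrict _ fun ⟨_, n, hn, hg⟩ =>
    isOfFinAddOrder_iff_nsmul_eq_zero.mpr ⟨n, hn, (eq_zero_iff _).mpr hg⟩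

lemma satToTorsion_surjective (K : AddSubgroup Γ) : Function.Surjective (satToTorsion Γ K) := by
  rintro ⟨q, hq⟩
  obtain ⟨g, rfl⟩ := mk_surjective q
  obtain ⟨n, hn, hng⟩ := isOfFinAddOrder_iff_nsmul_eq_zero.mp hq
  exact ⟨⟨g, n, hn, (eq_zero_iff _).mp hng⟩, rfl⟩

variable (Γ) in
noncomputable def satQuotientEquivTorsion (K : AddSubgroup Γ) :
    sat K ⧸ K.addSubgroupOf (sat K) ≃+ AddCommGroup.torsion (Γ ⧸ K) :=
  (quotientAddEquivOfEq (by simp [satToTorsion])).trans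
    (quotientKerEquivOfSurjective _ (satToTorsion_surjective K))

instance finite_sat_quotient [AddGroup.FG Γ] (K : AddSubgroup Γ) :
    Finite (sat K ⧸ K.addSubgroupOf (sat K)) :=
  .of_equiv _ (satQuotientEquivTorsion Γ K).symm.toEquiv

end Saturation

section Hom

variable {A G : Type*} [AddCommGroup A] [AddCommGroup G]

lemma finite_addMonoidHom_of_torsionwiseFinite [Finite A] (hG : TorsionwiseFinite G) :
    Finite (A →+ G) := by
  have := hG (Nat.card A) Nat.card_pos
  refine Finite.of_injective (fun φ : A →+ G => fun x : A =>
    (⟨φ x, by rw [← map_nsmul, card_nsmul_eq_zero', map_zero]⟩ : {y : G // Nat.card A • y = 0})) ?_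
  intro φ ψ h
  ext x
  exact congrArg Subtype.val (congrFun h x)

noncomputable def quotientAddMonoidHomEquiv (N : AddSubgroup A) :
    (A ⧸ N →+ G) ≃ {ψ : A →+ G // N ≤ ψ.ker} :=
  ((mk' N).liftOfSurjective (mk'_surjective N)).symm.trans
    (Equiv.subtypeEquivRight fun ψ => by rw [ker_mk'])

@[simp]
lemma quotientAddMonoidHomEquiv_symm_apply_mk (N : AddSubgroup A) (ψ : {ψ : A →+ G // N ≤ ψ.ker})
    (x : A) : (quotientAddMonoidHomEquiv N).symm ψ (QuotientAddGroup.mk x) = ψ.1 x :=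
  (mk' N).liftOfRightInverse_comp_apply _ (Function.rightInverse_surjInv (mk'_surjective N))
    ⟨ψ.1, (ker_mk' N).symm ▸ ψ.2⟩ x

end Hom

section Counting

variable {Γ G : Type*} [AddCommGroup Γ] [AddCommGroup G]

lemma closure_addSubgroupOf_le_ker_iff {M : AddSubgroup Γ} {X : Set Γ} (hX : X ⊆ M)
    (ψ : M →+ G) : (closure X).addSubgroupOf M ≤ ψ.ker ↔ ∀ y : M, (y : Γ) ∈ X → ψ y = 0 := by
  refine ⟨fun h y hy => h (mem_addSubgroupOf.mpr (subset_closure hy)), fun h y hy => ?_⟩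
  have hle : closure X ≤ ψ.ker.map M.subtype :=
    (closure_le _).mpr fun x hx => ⟨⟨x, hX hx⟩, h _ hx, rfl⟩
  obtain ⟨z, hz, hzy⟩ := hle hy
  rwa [← Subtype.ext hzy]

lemma card_addMonoidHom_quotient_closure_union {M : AddSubgroup Γ} {X Y : Set Γ}
    (hX : X ⊆ M) (hY : Y ⊆ M) :
    Nat.card (M ⧸ (closure (X ∪ Y)).addSubgroupOf M →+ G) =
      Nat.card {φ : M ⧸ (closure X).addSubgroupOf M →+ G //
        ∀ y : M, (y : Γ) ∈ Y → φ (QuotientAddGroup.mk y) = 0} := by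
  refine Nat.card_congr ((quotientAddMonoidHomEquiv _).trans ?_)
  calc {ψ : M →+ G // (closure (X ∪ Y)).addSubgroupOf M ≤ ψ.ker}
      ≃ {ψ : M →+ G // (closure X).addSubgroupOf M ≤ ψ.ker ∧
          ∀ y : M, (y : Γ) ∈ Y → ψ y = 0} :=
        Equiv.subtypeEquivRight fun ψ => by
          simp only [closure_addSubgroupOf_le_ker_iff (Set.union_subset hX hY),
            closure_addSubgroupOf_le_ker_iff hX, Set.mem_union, or_imp, forall_and]
    _ ≃ {ψ : {ψ : M →+ G // (closure X).addSubgroupOf M ≤ ψ.ker} //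
          ∀ y : M, (y : Γ) ∈ Y → ψ.1 y = 0} :=
        (Equiv.subtypeSubtypeEquivSubtypeInter _ _).symm
    _ ≃ _ := (quotientAddMonoidHomEquiv _).symm.subtypeEquiv fun ψ => by simp

lemma mult_eq_card_addMonoidHom_sat_quotient {H : AddSubgroup Γ} {X : Set Γ}
    (hH : H ≤ closure X) (hX : closure X ≤ sat H) :
    mult Γ G X = Nat.card (sat H ⧸ (closure X).addSubgroupOf (sat H) →+ G) := by
  rw [mult, ← sat_eq_of_le_of_le_sat hH hX]
  exact Nat.card_congr (satQuotientEquivTorsion Γ _).addMonoidHomCongrLeftEquiv.symm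

lemma mult_union_eq_card {ι : Type*} [DecidableEq ι] (a : ι → Γ) {S C : Finset ι}
    (hC : a '' C ⊆ sat (closure (a '' S))) :
    mult Γ G (a '' ↑(S ∪ C)) =
      Nat.card {φ : sat (closure (a '' S)) ⧸
          (closure (a '' S)).addSubgroupOf (sat (closure (a '' S))) →+ G //
        ∀ i ∈ C, ∀ g : sat (closure (a '' S)), (g : Γ) = a i → φ (QuotientAddGroup.mk g) = 0} := by
  have hS : a '' S ⊆ sat (closure (a '' S)) := fun x hx => le_sat _ (subset_closure hx)
  rw [Finset.coe_union, Set.image_union, mult_eq_card_addMonoidHom_sat_quotient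
    (closure_mono Set.subset_union_left) ((closure_le _).mpr (Set.union_subset hS hC)),
    card_addMonoidHom_quotient_closure_union hS hC]
  refine Nat.card_congr (Equiv.subtypeEquivRight fun φ => ?_)
  simp only [Set.mem_image, Finset.mem_coe, forall_exists_index, and_imp]
  exact ⟨fun h i hi g hg => h g i hi hg.symm, fun h g i hi hg => h i hi g hg.symm⟩

end Counting

lemma sum_powerset_neg_one_pow_mul_card_forall {ι X : Type*} [Finite X] (U : Finset ι)
    (P : ι → X → Prop) :
    ∑ C ∈ U.powerset, (-1 : ℤ) ^ C.card * Nat.card {x // ∀ i ∈ C, P i x} =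
      Nat.card {x // ∀ i ∈ U, ¬ P i x} := by
  classical
  have := Fintype.ofFinite X
  have hcard (V : Finset ι) (Q : ι → X → Prop) (Y : ι → Finset X) (hY : ∀ i x, x ∈ Y i ↔ Q i x) :
      Nat.card {x // ∀ i ∈ V, Q i x} = (V.inf Y).card := by
    rw [← Nat.card_eq_finsetCard]
    exact Nat.card_congr (Equiv.subtypeEquivRight fun x => by simp [Finset.mem_inf, hY])
  rw [hcard U _ (fun i => (Finset.univ.filter (P i))ᶜ) (by simp),
    Finset.inclusion_exclusion_card_inf_compl]
  exact Finset.sum_congr rfl fun C _ => by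
    rw [hcard C P (fun i => Finset.univ.filter (P i)) (by simp)]

open Finset in
lemma sum_filter_superset_eq_sum_powerset_sdiff {ι : Type*} [DecidableEq ι] {S T : Finset ι}
    (hST : S ⊆ T) (f : Finset ι → ℤ) :
    ∑ B ∈ T.powerset.filter (fun B => S ⊆ B), (-1 : ℤ) ^ (#B - #S) * f B =
      ∑ C ∈ (T \ S).powerset, (-1 : ℤ) ^ #C * f (S ∪ C) := by
  rw [← Icc_eq_filter_powerset, Icc_eq_image_powerset hST, sum_image]
  · refine sum_congr rfl fun C hC => ?_
    rw [card_union_of_disjoint (disjoint_sdiff.mono_right (mem_powerset.mp hC)),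
      Nat.add_sub_cancel_left]
  · intro C₁ h₁ C₂ h₂ h
    dsimp only at h
    rw [← union_sdiff_cancel_left (disjoint_sdiff.mono_right (mem_powerset.mp h₁)), h,
      union_sdiff_cancel_left (disjoint_sdiff.mono_right (mem_powerset.mp h₂))]

/-- Axiom (4) for `G`-multiplicities: if `𝒮 ⊆ 𝒯` and `r_𝒮 = r_𝒯`, then
`ρ_𝒯(𝒮;G) = Σ_{𝒮⊆ℬ⊆𝒯}(-1)^{#ℬ-#𝒮} m(ℬ;G)` equals the number of homomorphisms
`φ : Γ'/⟨𝒮⟩ → G` (with `Γ'` the saturation of `⟨𝒮⟩`) not vanishing on any element of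
`𝒯 \ 𝒮`; in particular it is nonnegative. -/
theorem axiom4_nonneg {ι Γ : Type*} [DecidableEq ι] [AddCommGroup Γ] [AddGroup.FG Γ]
    (G : Type*) [AddCommGroup G] (hG : TorsionwiseFinite G)
    (a : ι → Γ) (S T : Finset ι) (hST : S ⊆ T)
    (hr : rk Γ (a '' (S : Set ι)) = rk Γ (a '' (T : Set ι))) :
    (∑ B ∈ T.powerset.filter (fun B => S ⊆ B),
        (-1 : ℤ) ^ (B.card - S.card) * (mult Γ G (a '' (B : Set ι)) : ℤ)) =
      (Nat.card {φ : ((sat (AddSubgroup.closure (a '' (S : Set ι)))) ⧸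
          ((AddSubgroup.closure (a '' (S : Set ι))).addSubgroupOf
            (sat (AddSubgroup.closure (a '' (S : Set ι)))))) →+ G //
        ∀ i ∈ T \ S, ∀ g : sat (AddSubgroup.closure (a '' (S : Set ι))),
          (g : Γ) = a i → φ (QuotientAddGroup.mk g) ≠ 0} : ℤ) ∧
    0 ≤ ∑ B ∈ T.powerset.filter (fun B => S ⊆ B),
        (-1 : ℤ) ^ (B.card - S.card) * (mult Γ G (a '' (B : Set ι)) : ℤ) := by
  set K := closure (a '' (S : Set ι))
  have haT : a '' T ⊆ sat K := fun x hx =>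
    le_sat_of_finrank_eq (closure_mono (Set.image_mono (Finset.coe_subset.mpr hST))) hr
      (subset_closure hx)
  have := finite_addMonoidHom_of_torsionwiseFinite (A := sat K ⧸ K.addSubgroupOf (sat K)) hG
  have hρ : ∑ B ∈ T.powerset.filter (fun B => S ⊆ B),
      (-1 : ℤ) ^ (B.card - S.card) * (mult Γ G (a '' (B : Set ι)) : ℤ) =
      Nat.card {φ : sat K ⧸ K.addSubgroupOf (sat K) →+ G //
        ∀ i ∈ T \ S, ¬ ∀ g : sat K, (g : Γ) = a i → φ (QuotientAddGroup.mk g) = 0} := by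
    rw [sum_filter_superset_eq_sum_powerset_sdiff hST, ← sum_powerset_neg_one_pow_mul_card_forall]
    refine Finset.sum_congr rfl fun C hC => ?_
    rw [mult_union_eq_card a ((Set.image_mono ?_).trans haT)]
    exact Finset.coe_subset.mpr ((Finset.mem_powerset.mp hC).trans Finset.sdiff_subset)
  refine ⟨hρ.trans ?_, hρ ▸ Int.natCast_nonneg _⟩
  refine congrArg _ (Nat.card_congr (Equiv.subtypeEquivRight fun φ => forall₂_congr fun i hi => ?_))
  have hai : a i ∈ sat K := haT ⟨i, (Finset.mem_sdiff.mp hi).1, rfl⟩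
  rw [SetLike.forall_coe_eq_iff hai, SetLike.forall_coe_eq_iff hai]
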